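/- The dimension function # is monotone under subexpression replacement: for any one-hole expression context C and expressions e, e', if #(e) ⊑ #(e') in the flat lattice N⊥⊤ then #(C[e]) ⊑ #(C[e']). -/

import Mathlib

inductive Flat where
  | bot
  | lift (n : ℕ)
  | top
deriving DecidableEq

namespace Flat

/-- The flat order: reflexive closure of `⊥ ⊑ lift n` and `lift n ⊑ ⊤`. -/
def le : Flat → Flat → Prop
  | .bot, _ => True
  | _, .top => True
  | .lift m, .lift n => m = n
  | _, _ => False

/-- Join in the flat lattice. -/
def sup : Flat → Flat → Flat
  | .bot, x => x
  | x, .bot => x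
  | .top, _ => .top
  | _, .top => .top
  | .lift m, .lift n => if m = n then .lift m else .top

/-- Meet in the flat lattice. -/
def inf : Flat → Flat → Flat
  | .top, x => x
  | x, .top => x
  | .bot, _ => .bot
  | _, .bot => .bot
  | .lift m, .lift n => if m = n then .lift m else .bot

end Flat
/-- `leb d (lift 1)` etc.: boolean version of the flat order. -/
def Flat.leb : Flat → Flat → Bool
  | .bot, _ => true
  | _, .top => true
  | .lift m, .lift n => m == n
  | _, _ => false

/-- `d ⊑ lift m` for some `m ≥ n`. -/
def Flat.atLeast (d : Flat) (n : ℕ) : Bool :=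
  match d with
  | .bot => true
  | .lift m => decide (n ≤ m)
  | .top => false

/-- epsilon0 expressions (handles omitted: they are immaterial for dimensions). -/
inductive Expr where
  | var (x : ℕ)
  | const (c : ℤ)
  | bundle (items : List Expr)
  | letE (vars : List ℕ) (bound : Expr) (body : Expr)
  | call (f : ℕ) (args : List Expr)
  | prim (p : ℕ) (args : List Expr)
  | ifE (disc : Expr) (cases : List ℤ) (thenB : Expr) (elseB : Expr)
  | fork (f : ℕ) (args : List Expr)
  | joinE (e : Expr)

/-- In- and out-dimensions of procedures and primitives. -/
structure Env where
  procOut : ℕ → Flat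
  procArity : ℕ → ℕ
  primOut : ℕ → ℕ
  primArity : ℕ → ℕ

/-- The (total extension of the) dimension function `#`. -/
def dim (Γ : Env) : Expr → Flat
  | .var _ => .lift 1
  | .const _ => .lift 1
  | .bundle items =>
      if items.attach.all (fun ⟨e, _⟩ => Flat.leb (dim Γ e) (.lift 1)) then
        .lift items.length
      else .top
  | .letE vars bound body =>
      if Flat.atLeast (dim Γ bound) vars.length ∧ dim Γ body ≠ .top then
        dim Γ body
      else .top
  | .call f args =>
      if args.length = Γ.procArity f ∧
         (args.attach.all fun ⟨e, _⟩ => Flat.leb (dim Γ e) (.lift 1)) ∧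
         Γ.procOut f ≠ .top then
        Γ.procOut f
      else .top
  | .prim p args =>
      if args.length = Γ.primArity p ∧
         (args.attach.all fun ⟨e, _⟩ => Flat.leb (dim Γ e) (.lift 1)) then
        .lift (Γ.primOut p)
      else .top
  | .ifE d _ t e =>
      if Flat.leb (dim Γ d) (.lift 1) ∧ Flat.sup (dim Γ t) (dim Γ e) ≠ .top then
        Flat.sup (dim Γ t) (dim Γ e)
      else .top
  | .fork f args =>
      if args.length = Γ.procArity f ∧
         (args.attach.all fun ⟨e, _⟩ => Flat.leb (dim Γ e) (.lift 1)) ∧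
         Flat.leb (Γ.procOut f) (.lift 1) then
        .lift 1
      else .top
  | .joinE e =>
      if Flat.leb (dim Γ e) (.lift 1) then .lift 1 else .top
/-- One-hole expression contexts. -/
inductive Ctx where
  | hole
  | bundle (pre : List Expr) (c : Ctx) (post : List Expr)
  | letBound (vars : List ℕ) (c : Ctx) (body : Expr)
  | letBody (vars : List ℕ) (bound : Expr) (c : Ctx)
  | call (f : ℕ) (pre : List Expr) (c : Ctx) (post : List Expr)
  | prim (p : ℕ) (pre : List Expr) (c : Ctx) (post : List Expr)
  | ifDisc (c : Ctx) (cases : List ℤ) (t e : Expr)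
  | ifThen (d : Expr) (cases : List ℤ) (c : Ctx) (e : Expr)
  | ifElse (d : Expr) (cases : List ℤ) (t : Expr) (c : Ctx)
  | fork (f : ℕ) (pre : List Expr) (c : Ctx) (post : List Expr)
  | joinE (c : Ctx)

/-- Filling the hole of a context with an expression. -/
def Ctx.fill : Ctx → Expr → Expr
  | .hole, e => e
  | .bundle pre c post, e => .bundle (pre ++ [c.fill e] ++ post)
  | .letBound vs c body, e => .letE vs (c.fill e) body
  | .letBody vs b c, e => .letE vs b (c.fill e)
  | .call f pre c post, e => .call f (pre ++ [c.fill e] ++ post)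
  | .prim p pre c post, e => .prim p (pre ++ [c.fill e] ++ post)
  | .ifDisc c cs t el, e => .ifE (c.fill e) cs t el
  | .ifThen d cs c el, e => .ifE d cs (c.fill e) el
  | .ifElse d cs t c, e => .ifE d cs t (c.fill e)
  | .fork f pre c post, e => .fork f (pre ++ [c.fill e] ++ post)
  | .joinE c, e => .joinE (c.fill e)

/-! Every clause of `dim` has the shape `if side condition then value else ⊤`. The side
conditions only bound the dimensions of immediate subexpressions from above, so they survive
passing to a smaller dimension, and the values are monotone in those dimensions. Induction on
the context then propagates `#(e) ⊑ #(e')` outwards one constructor at a time. -/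

namespace Flat

theorem le_refl (x : Flat) : x.le x := by
  cases x <;> simp [le]

theorem le_top (x : Flat) : x.le .top := by
  cases x <;> trivial

theorem le_trans {a b c : Flat} (hab : a.le b) (hbc : b.le c) : a.le c := by
  cases a <;> cases b <;> cases c <;> simp_all [le]

theorem leb_eq_true_iff {a b : Flat} : a.leb b = true ↔ a.le b := by
  cases a <;> cases b <;> simp [leb, le]

theorem leb_of_le {a b c : Flat} (hab : a.le b) (hbc : b.leb c = true) : a.leb c = true :=
  leb_eq_true_iff.2 (le_trans hab (leb_eq_true_iff.1 hbc))

theorem ne_top_of_le {a b : Flat} (hab : a.le b) (hb : b ≠ .top) : a ≠ .top := by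
  cases a <;> cases b <;> simp_all [le]

theorem atLeast_of_le {a b : Flat} {n : ℕ} (hab : a.le b) (hb : b.atLeast n = true) :
    a.atLeast n = true := by
  cases a <;> cases b <;> simp_all [le, atLeast]

theorem sup_mono {a b c d : Flat} (hab : a.le b) (hcd : c.le d) : (a.sup c).le (b.sup d) := by
  cases a <;> cases b <;> cases c <;> cases d <;> simp_all [le, sup] <;> split_ifs <;> simp_all

theorem ite_le_ite {p q : Prop} [Decidable p] [Decidable q] {a b : Flat} (hqp : q → p)
    (hab : a.le b) : (if p then a else .top).le (if q then b else .top) := by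
  split_ifs with hp hq hq
  exacts [hab, le_top a, absurd (hqp hq) hp, le_refl _]

theorem ite_ne_top_le_ite_ne_top {p : Prop} [Decidable p] {a b : Flat} (hab : a.le b) :
    (if p ∧ a ≠ .top then a else .top).le (if p ∧ b ≠ .top then b else .top) :=
  ite_le_ite (And.imp_right (ne_top_of_le hab)) hab

end Flat

theorem all_dim_le_one_of_le {Γ : Env} {pre post : List Expr} {a b : Expr}
    (hab : (dim Γ a).le (dim Γ b))
    (hb : (pre ++ [b] ++ post).all (fun e => (dim Γ e).leb (.lift 1)) = true) :
    (pre ++ [a] ++ post).all (fun e => (dim Γ e).leb (.lift 1)) = true := by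
  simp only [List.all_append, List.all_cons, List.all_nil, Bool.and_true, Bool.and_eq_true] at hb ⊢
  exact ⟨⟨hb.1.1, Flat.leb_of_le hab hb.1.2⟩, hb.2⟩

/-- the dimension function is monotone under subexpression
replacement. -/
theorem dim_monotone (Γ : Env) (C : Ctx) (e e' : Expr)
    (h : Flat.le (dim Γ e) (dim Γ e')) :
    Flat.le (dim Γ (C.fill e)) (dim Γ (C.fill e')) := by
  induction C <;> simp only [Ctx.fill, dim, List.all_subtype, List.unattach_attach,
    List.length_append, List.length_singleton]
  case hole => exact h
  case bundle ih =>
    exact Flat.ite_le_ite (all_dim_le_one_of_le ih) (Flat.le_refl _)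
  case letBound ih =>
    exact Flat.ite_le_ite (And.imp_left (Flat.atLeast_of_le ih)) (Flat.le_refl _)
  case letBody ih => exact Flat.ite_ne_top_le_ite_ne_top ih
  case call ih =>
    exact Flat.ite_le_ite (And.imp_right (And.imp_left (all_dim_le_one_of_le ih))) (Flat.le_refl _)
  case prim ih =>
    exact Flat.ite_le_ite (And.imp_right (all_dim_le_one_of_le ih)) (Flat.le_refl _)
  case ifDisc ih =>
    exact Flat.ite_le_ite (And.imp_left (Flat.leb_of_le ih)) (Flat.le_refl _)
  case ifThen ih => exact Flat.ite_ne_top_le_ite_ne_top (Flat.sup_mono ih (Flat.le_refl _))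
  case ifElse ih => exact Flat.ite_ne_top_le_ite_ne_top (Flat.sup_mono (Flat.le_refl _) ih)
  case fork ih =>
    exact Flat.ite_le_ite (And.imp_right (And.imp_left (all_dim_le_one_of_le ih))) (Flat.le_refl _)
  case joinE ih => exact Flat.ite_le_ite (Flat.leb_of_le ih) (Flat.le_refl _)
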